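/- Let (P, x_L, x_R) be a finite oriented poset with weight function w into a commutative ring R, and let S be the set of lower sets I of P satisfying (x_R ∈ I implies x_L ∈ I). Then loop_↘(M_w(P↘)) = [[Σ_{I ∈ S} w(I), −Σ_{I ∈ S, x_R ∈ I} w(I)], [Σ_{I ∈ S, x_R ∉ I} w(I), 0]]. In other words, loop_↘ applied to the down weight matrix of (P, x_L, x_R) equals the down weight matrix of the source-looped oriented poset ▷(P↘), obtained by adding the relation x_L ≤ x_R to P and taking both distinguished vertices to be x_R. -/
import Mathlib


open Classical Relation

noncomputable section

variable {R : Type*} [CommRing R]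

/-- A finite set `I` is a lower set (order ideal) for the relation `r`. -/
def IsLowerSetRel {α : Type*} (r : α → α → Prop) (I : Finset α) : Prop :=
  ∀ x ∈ I, ∀ y, r y x → y ∈ I

/-- The sum of the weights `∏ i ∈ I, w i` over all lower sets `I` of the relation `r`
satisfying the condition `C`.  Taking `C = fun _ => True` gives the weight polynomial. -/
def wSum {α : Type*} [Fintype α] (r : α → α → Prop) (w : α → R) (C : Finset α → Prop) : R :=
  ∑ I ∈ Finset.univ.filter (fun I : Finset α => IsLowerSetRel r I ∧ C I), ∏ i ∈ I, w i

/-- The down weight matrix `M_w(P↘)` of an oriented poset `(P, xL, xR)`. -/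
def downMat {α : Type*} [Fintype α] (r : α → α → Prop) (w : α → R) (xL xR : α) :
    Matrix (Fin 2) (Fin 2) R :=
  !![wSum r w (fun _ => True), -wSum r w (fun I => xR ∈ I);
     wSum r w (fun I => xL ∉ I), -wSum r w (fun I => xR ∈ I ∧ xL ∉ I)]

/-- The up weight matrix `M_w(P↗)` of an oriented poset `(P, xL, xR)`. -/
def upMat {α : Type*} [Fintype α] (r : α → α → Prop) (w : α → R) (xL xR : α) :
    Matrix (Fin 2) (Fin 2) R :=
  !![wSum r w (fun I => xR ∈ I), wSum r w (fun I => xR ∉ I);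
     wSum r w (fun I => xR ∈ I ∧ xL ∉ I), wSum r w (fun I => xR ∉ I ∧ xL ∉ I)]

/-- The order relation of the glued poset `P↘Q` on the disjoint union `P ⊔ Q`:
elements of `P` (resp. `Q`) compare as in `P` (resp. `Q`), an element `a ∈ Q` lies below
`b ∈ P` iff `a ≤ yL` in `Q` and `xR ≤ b` in `P`, and no element of `P` lies below an
element of `Q`. -/
def glueDown {α β : Type*} (rP : α → α → Prop) (rQ : β → β → Prop) (xR : α) (yL : β) :
    α ⊕ β → α ⊕ β → Prop
  | .inl a, .inl b => rP a b
  | .inr a, .inr b => rQ a b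
  | .inr a, .inl b => rQ a yL ∧ rP xR b
  | .inl _, .inr _ => False

/-- The order relation of the glued poset `P↗Q` on the disjoint union `P ⊔ Q`:
elements of `P` (resp. `Q`) compare as in `P` (resp. `Q`), an element `a ∈ P` lies below
`b ∈ Q` iff `a ≤ xR` in `P` and `yL ≤ b` in `Q`, and no element of `Q` lies below an
element of `P`. -/
def glueUp {α β : Type*} (rP : α → α → Prop) (rQ : β → β → Prop) (xR : α) (yL : β) :
    α ⊕ β → α ⊕ β → Prop
  | .inl a, .inl b => rP a b
  | .inr a, .inr b => rQ a b
  | .inl a, .inr b => rP a xR ∧ rQ yL b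
  | .inr _, .inl _ => False
/-- `loop_↘` on 2×2 matrices: `[[a,b],[c,d]] ↦ [[a+d, b−d],[a+b, 0]]`. -/
def loopDownM (M : Matrix (Fin 2) (Fin 2) R) : Matrix (Fin 2) (Fin 2) R :=
  !![M 0 0 + M 1 1, M 0 1 - M 1 1; M 0 0 + M 0 1, 0]

lemma wSum_congr' {α : Type*} [Fintype α] (r r' : α → α → Prop) (w : α → R)
    (C C' : Finset α → Prop)
    (h : ∀ I, (IsLowerSetRel r I ∧ C I) ↔ (IsLowerSetRel r' I ∧ C' I)) :
    wSum r w C = wSum r' w C' := by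
  unfold wSum
  congr 1
  ext I
  simp only [Finset.mem_filter, Finset.mem_univ, true_and]
  exact h I

lemma wSum_split' {α : Type*} [Fintype α] (r : α → α → Prop) (w : α → R)
    (C P : Finset α → Prop) :
    wSum r w C = wSum r w (fun I => C I ∧ P I) + wSum r w (fun I => C I ∧ ¬ P I) := by
  unfold wSum
  rw [← Finset.sum_filter_add_sum_filter_not
    (Finset.univ.filter (fun I : Finset α => IsLowerSetRel r I ∧ C I)) (fun I => P I)]
  congr 1 <;>
  · apply Finset.sum_congr _ (fun _ _ => rfl)
    ext I
    simp only [Finset.mem_filter, Finset.mem_univ, true_and]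
    tauto

lemma lowerSet_loop_iff {α : Type*} [PartialOrder α] (xL xR : α) (I : Finset α) :
    IsLowerSetRel (ReflTransGen (fun a b : α => a ≤ b ∨ (a = xL ∧ b = xR))) I ↔
      IsLowerSetRel (· ≤ ·) I ∧ (xR ∈ I → xL ∈ I) := by
  constructor
  · intro h
    refine ⟨fun x hx y hy => h x hx y (ReflTransGen.single (Or.inl hy)), fun hR =>
      h xR hR xL (ReflTransGen.single (Or.inr ⟨rfl, rfl⟩))⟩
  · rintro ⟨hL, hImp⟩ x hx y hy
    induction hy using ReflTransGen.head_induction_on with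
    | refl => exact hx
    | head hab _ ih =>
      rcases hab with h1 | ⟨rfl, rfl⟩
      · exact hL _ ih _ h1
      · exact hImp ih

/-- `loop_↘(M_w(P↘))` is the matrix of sums over lower sets `I` with
`xR ∈ I → xL ∈ I`; that is, the down weight matrix of the source-looped oriented poset
`▷(P↘)`, obtained by adding the relation `xL ≤ xR` and taking both vertices to be `xR`. -/
theorem loopDownM_downMat {α : Type*} [Fintype α] [PartialOrder α] (w : α → R) (xL xR : α) :
    loopDownM (downMat (· ≤ ·) w xL xR) =
      !![wSum (· ≤ ·) w (fun I => xR ∈ I → xL ∈ I),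
         -wSum (· ≤ ·) w (fun I => (xR ∈ I → xL ∈ I) ∧ xR ∈ I);
         wSum (· ≤ ·) w (fun I => (xR ∈ I → xL ∈ I) ∧ xR ∉ I), 0] ∧
    loopDownM (downMat (· ≤ ·) w xL xR) =
      downMat (ReflTransGen (fun a b : α => a ≤ b ∨ (a = xL ∧ b = xR))) w xR xR := by
  set r' := ReflTransGen (fun a b : α => a ≤ b ∨ (a = xL ∧ b = xR)) with hr'
  have key := lowerSet_loop_iff xL xR
  have h1 : wSum (· ≤ ·) w (fun _ : Finset α => True) =
      wSum (· ≤ ·) w (fun I => xR ∈ I ∧ xL ∉ I) +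
      wSum (· ≤ ·) w (fun I => xR ∈ I → xL ∈ I) := by
    rw [wSum_split' (· ≤ ·) w (fun _ => True) (fun I => xR ∈ I ∧ xL ∉ I)]
    congr 1
    · exact wSum_congr' _ _ _ _ _ (fun I => by tauto)
    · exact wSum_congr' _ _ _ _ _ (fun I => by tauto)
  have h2 : wSum (· ≤ ·) w (fun I : Finset α => xR ∈ I) =
      wSum (· ≤ ·) w (fun I => xR ∈ I ∧ xL ∉ I) +
      wSum (· ≤ ·) w (fun I => (xR ∈ I → xL ∈ I) ∧ xR ∈ I) := by
    rw [wSum_split' (· ≤ ·) w (fun I => xR ∈ I) (fun I => xL ∉ I)]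
    congr 1
    exact wSum_congr' _ _ _ _ _ (fun I => by tauto)
  have h3 : wSum (· ≤ ·) w (fun _ : Finset α => True) =
      wSum (· ≤ ·) w (fun I : Finset α => xR ∈ I) +
      wSum (· ≤ ·) w (fun I => (xR ∈ I → xL ∈ I) ∧ xR ∉ I) := by
    rw [wSum_split' (· ≤ ·) w (fun _ => True) (fun I => xR ∈ I)]
    congr 1
    · exact wSum_congr' _ _ _ _ _ (fun I => by tauto)
    · exact wSum_congr' _ _ _ _ _ (fun I => by tauto)
  have first : loopDownM (downMat (· ≤ ·) w xL xR) =
      !![wSum (· ≤ ·) w (fun I => xR ∈ I → xL ∈ I),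
         -wSum (· ≤ ·) w (fun I => (xR ∈ I → xL ∈ I) ∧ xR ∈ I);
         wSum (· ≤ ·) w (fun I => (xR ∈ I → xL ∈ I) ∧ xR ∉ I), 0] := by
    unfold loopDownM downMat
    ext i j
    fin_cases i <;> fin_cases j <;>
      simp only [Matrix.cons_val', Matrix.cons_val_zero, Matrix.cons_val_one,
        Matrix.head_cons, Matrix.head_fin_const, Matrix.empty_val',
        Matrix.cons_val_fin_one, Matrix.of_apply, Fin.isValue, Fin.zero_eta, Fin.mk_one]
    · linear_combination h1
    · linear_combination -h2
    · linear_combination h3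
  refine ⟨first, first.trans ?_⟩
  have e1 : wSum (· ≤ ·) w (fun I => xR ∈ I → xL ∈ I) =
      wSum r' w (fun _ : Finset α => True) :=
    wSum_congr' _ _ _ _ _ (fun I => by rw [key I]; tauto)
  have e2 : wSum (· ≤ ·) w (fun I => (xR ∈ I → xL ∈ I) ∧ xR ∈ I) =
      wSum r' w (fun I : Finset α => xR ∈ I) :=
    wSum_congr' _ _ _ _ _ (fun I => by rw [key I]; tauto)
  have e3 : wSum (· ≤ ·) w (fun I => (xR ∈ I → xL ∈ I) ∧ xR ∉ I) =
      wSum r' w (fun I : Finset α => xR ∉ I) :=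
    wSum_congr' _ _ _ _ _ (fun I => by rw [key I]; tauto)
  have e4 : wSum r' w (fun I : Finset α => xR ∈ I ∧ xR ∉ I) = 0 := by
    unfold wSum
    refine Finset.sum_eq_zero fun I hI => ?_
    simp only [Finset.mem_filter] at hI
    exact absurd hI.2.2.1 hI.2.2.2
  unfold downMat
  rw [e1, e2, e3, e4, neg_zero]

end
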